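/- For every real number $a$ and every real $x$, $\cos(a \sin x) = J_0(a) + 2\sum_{k=1}^{\infty} J_{2k}(a)\cos(2kx)$, where $J_k$ denotes the Bessel function of the first kind of order $k$. -/

import Mathlib

/-- Bessel function of the first kind of nonnegative integer order. -/
noncomputable def besselJ (k : ℕ) (a : ℝ) : ℝ :=
  ∑' m : ℕ, ((-1 : ℝ) ^ m / (m.factorial * (m + k).factorial)) * (a / 2) ^ (2 * m + k)

/-- Bessel function of the first kind of integer order, with `J_{-k} = (-1)^k J_k`. -/
noncomputable def besselJInt (k : ℤ) (a : ℝ) : ℝ :=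
  if 0 ≤ k then besselJ k.toNat a else (-1) ^ (-k).toNat * besselJ (-k).toNat a

/-!
Multiplying the exponential series of `z = (a/2) t` and `w = -(a/2) t⁻¹` and grouping the
terms `z^p w^q / (p! q!)` by `p - q` gives the generating function
`exp ((a/2) (t - t⁻¹)) = ∑_{n ∈ ℤ} J_n(a) tⁿ`. At `t = e^{ix}` the left side is `e^{i a sin x}`;
taking real parts and pairing `n` with `-n`, where `J_{-n} = (-1)ⁿ J_n`, the odd orders cancel
and the even ones double.
-/

open scoped Nat

lemma HasSum.two_mul_even_of_neg_eq {R : Type*} [Ring R] [TopologicalSpace R]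
    [IsTopologicalAddGroup R] {f : ℤ → R} {s : R} (hf : HasSum f s)
    (hneg : ∀ n : ℕ, f (-n) = (-1) ^ n * f n) :
    HasSum (fun k : ℕ => 2 * f (2 * (k + 1))) (s - f 0) := by
  have hfold := hf.nat_add_neg
  rw [← hasSum_nat_add_iff' 1] at hfold
  simp only [Finset.sum_range_one, Nat.cast_zero, neg_zero] at hfold
  rw [show s + f 0 - (f 0 + f 0) = s - f 0 by abel] at hfold
  have hodd : ∀ n ∉ Set.range (fun k : ℕ => 2 * k + 1), f (n + 1 : ℕ) + f (-(n + 1 : ℕ)) = 0 := by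
    intro n hn
    rcases Nat.even_or_odd n with ⟨k, rfl⟩ | ⟨k, rfl⟩
    · rw [hneg, (Even.add_one ⟨k, rfl⟩).neg_one_pow, neg_one_mul, add_neg_cancel]
    · exact absurd ⟨k, rfl⟩ hn
  refine ((Function.Injective.hasSum_iff (fun _ _ h => by simpa using h) hodd).2 hfold).congr_fun
    fun k => ?_
  rw [Function.comp_apply, hneg, show 2 * k + 1 + 1 = 2 * (k + 1) by ring,
    (even_two_mul _).neg_one_pow, one_mul, ← two_mul]
  push_cast
  rfl

def natPairDiffEquiv : ℤ × ℕ ≃ ℕ × ℕ where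
  toFun
    | (Int.ofNat d, m) => (m + d, m)
    | (Int.negSucc d, m) => (m, m + (d + 1))
  invFun q := (q.1 - q.2, min q.1 q.2)
  left_inv := by
    rintro ⟨d | d, m⟩ <;> simp only [Prod.mk.injEq, Int.ofNat_eq_natCast, Int.negSucc_eq] <;> omega
  right_inv := by
    rintro ⟨p, q⟩
    rcases le_or_gt q p with h | h
    · obtain ⟨d, rfl⟩ := Nat.exists_eq_add_of_le h
      simp
    · obtain ⟨d, rfl⟩ : ∃ d, q = p + (d + 1) := ⟨q - p - 1, by omega⟩
      simp only [show (p : ℤ) - (p + (d + 1) : ℕ) = Int.negSucc d by omega, min_eq_left h.le]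

lemma hasSum_besselJ (k : ℕ) (a : ℝ) :
    HasSum (fun m : ℕ => (-1 : ℝ) ^ m / (m ! * (m + k)!) * (a / 2) ^ (2 * m + k))
      (besselJ k a) := by
  refine Summable.hasSum <| .of_norm_bounded
    ((Real.summable_pow_div_factorial ((a / 2) ^ 2)).mul_left (|a / 2| ^ k)) fun m => ?_
  have hfact : (m ! : ℝ) ≤ m ! * (m + k)! :=
    le_mul_of_one_le_right (by positivity) (mod_cast (m + k).factorial_pos)
  calc _ = |a / 2| ^ k * ((a / 2) ^ 2) ^ m / (m ! * (m + k)!) := by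
        rw [Real.norm_eq_abs, abs_mul, abs_div, abs_pow, abs_pow, abs_neg, abs_one, one_pow,
          abs_of_pos (by positivity), pow_add, pow_mul, sq_abs]
        ring
    _ ≤ |a / 2| ^ k * ((a / 2) ^ 2) ^ m / m ! := by gcongr
    _ = _ := by ring

lemma besselJInt_natCast (n : ℕ) (a : ℝ) : besselJInt n a = besselJ n a := by
  simp [besselJInt]

lemma besselJInt_neg_natCast (n : ℕ) (a : ℝ) : besselJInt (-n) a = (-1) ^ n * besselJ n a := by
  rcases n with _ | n
  · simp [besselJInt]
  · rw [besselJInt, if_neg (by omega), neg_neg, Int.toNat_natCast]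

section Complex

open Complex

lemma hasSum_pow_div_factorial (z : ℂ) : HasSum (fun n => z ^ n / n !) (exp z) := by
  rw [exp_eq_exp_ℂ]
  exact NormedSpace.expSeries_div_hasSum_exp z

lemma hasSum_pow_div_factorial_mul_pow_div_factorial (z w : ℂ) :
    HasSum (fun pq : ℕ × ℕ => z ^ pq.1 / pq.1 ! * (w ^ pq.2 / pq.2 !)) (exp (z + w)) := by
  have hs := summable_mul_of_summable_norm (NormedSpace.norm_expSeries_div_summable z)
    (NormedSpace.norm_expSeries_div_summable w)
  have h := (hasSum_pow_div_factorial z).mul (hasSum_pow_div_factorial w) hs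
  rwa [← exp_add] at h

lemma hasSum_besselJInt_mul_zpow (a : ℝ) {t : ℂ} (ht : t ≠ 0) :
    HasSum (fun n : ℤ => (besselJInt n a : ℂ) * t ^ n) (exp (a / 2 * (t - t⁻¹))) := by
  have hprod := hasSum_pow_div_factorial_mul_pow_div_factorial (a / 2 * t) (-(a / 2) * t⁻¹)
  rw [show a / 2 * t + -(a / 2) * t⁻¹ = a / 2 * (t - t⁻¹) by ring] at hprod
  have hterm (p q : ℕ) : (a / 2 * t) ^ p / p ! * ((-(a / 2) * t⁻¹) ^ q / q !) =
      ((-1) ^ q / (p ! * q !) * (a / 2) ^ (p + q) : ℝ) * t ^ ((p : ℤ) - q) := by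
    rw [zpow_sub₀ ht, zpow_natCast, zpow_natCast, neg_mul, neg_pow, mul_pow, mul_pow, inv_pow]
    push_cast
    field_simp
    ring
  refine (natPairDiffEquiv.hasSum_iff.2 hprod).prod_fiberwise fun n => ?_
  rcases n with d | d
  · rw [Int.ofNat_eq_natCast, besselJInt_natCast, zpow_natCast]
    refine ((hasSum_ofReal.2 (hasSum_besselJ d a)).mul_right (t ^ d)).congr_fun fun m => ?_
    simp only [Function.comp, natPairDiffEquiv, Equiv.coe_fn_mk, hterm]
    push_cast
    rw [add_sub_cancel_left, zpow_natCast]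
    ring
  · rw [show (besselJInt (Int.negSucc d) a : ℂ) * t ^ Int.negSucc d =
        besselJ (d + 1) a * ((-1) ^ (d + 1) * t ^ (-(d + 1 : ℤ))) by
      rw [Int.negSucc_eq, ← Nat.cast_add_one, besselJInt_neg_natCast]; push_cast; ring]
    refine ((hasSum_ofReal.2 (hasSum_besselJ (d + 1) a)).mul_right _).congr_fun fun m => ?_
    simp only [Function.comp, natPairDiffEquiv, Equiv.coe_fn_mk, hterm]
    push_cast
    rw [show (m : ℤ) - (m + (d + 1)) = -(d + 1) by ring]
    ring

lemma hasSum_besselJInt_mul_cos (a x : ℝ) :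
    HasSum (fun n : ℤ => besselJInt n a * Real.cos (n * x)) (Real.cos (a * Real.sin x)) := by
  have hexp : a / 2 * (cexp (x * I) - cexp (-(x * I))) = ((a * Real.sin x : ℝ) : ℂ) * I := by
    push_cast
    rw [Complex.sin, neg_mul]
    linear_combination (a / 2 * (cexp (x * I) - cexp (-(x * I)))) * I_sq
  have h := hasSum_re (hasSum_besselJInt_mul_zpow a (exp_ne_zero (x * I)))
  rw [← exp_neg, hexp, exp_ofReal_mul_I_re] at h
  refine h.congr_fun fun n => ?_
  rw [← exp_int_mul, re_ofReal_mul, show (n : ℂ) * (x * I) = ((n * x : ℝ) : ℂ) * I by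
    push_cast; ring, exp_ofReal_mul_I_re]

end Complex

theorem cos_a_sin_expansion (a x : ℝ) :
    HasSum (fun k : ℕ => 2 * besselJ (2 * (k + 1)) a * Real.cos ((2 * (k + 1) : ℝ) * x))
      (Real.cos (a * Real.sin x) - besselJ 0 a) := by
  have h := (hasSum_besselJInt_mul_cos a x).two_mul_even_of_neg_eq fun n => by
    rw [besselJInt_neg_natCast, besselJInt_natCast, Int.cast_neg, neg_mul, Real.cos_neg, mul_assoc]
  rw [show besselJInt 0 a = besselJ 0 a from besselJInt_natCast 0 a, Int.cast_zero, zero_mul,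
    Real.cos_zero, mul_one] at h
  refine h.congr_fun fun k => ?_
  rw [show (2 * (k + 1) : ℤ) = ((2 * (k + 1) : ℕ) : ℤ) by push_cast; ring, besselJInt_natCast]
  push_cast
  ring
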